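/- arXiv:1105.3948 — 2 statements merged into one kernel-verified Lean document; each statement's English description precedes it below -/
import Mathlib

section
/- The assignment of the isotropic line ℝx to the maximal totally isotropic subspace S(x) = range X(x) is injective: if x, x' ∈ ℝ⁶ are nonzero with Q(x) = Q(x') = 0 and range X(x) = range X(x') (as complex subspaces of ℂ⁴), then x' = λ x for some nonzero real number λ. -/
open Matrix Complex

/-- The six antilinear-Clifford matrices Γ₁,…,Γ₆ (indexed 0,…,5). -/
noncomputable def Gam : Fin 6 → Matrix (Fin 4) (Fin 4) ℂ
  | 0 => !![0, 0, I, 0; 0, 0, 0, -I; I, 0, 0, 0; 0, -I, 0, 0]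
  | 1 => !![0, 0, 1, 0; 0, 0, 0, 1; 1, 0, 0, 0; 0, 1, 0, 0]
  | 2 => !![0, 0, 0, -I; 0, 0, -I, 0; 0, -I, 0, 0; -I, 0, 0, 0]
  | 3 => !![0, I, 0, 0; -I, 0, 0, 0; 0, 0, 0, I; 0, 0, -I, 0]
  | 4 => !![0, 0, 0, -1; 0, 0, 1, 0; 0, 1, 0, 0; -1, 0, 0, 0]
  | 5 => !![0, 1, 0, 0; -1, 0, 0, 0; 0, 0, 0, -1; 0, 0, 1, 0]

/-- X(x) = Σ x^α Γ_α. -/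
noncomputable def Xm (x : Fin 6 → ℝ) : Matrix (Fin 4) (Fin 4) ℂ :=
  ∑ α : Fin 6, (x α : ℂ) • Gam α

/-- The quadratic form of signature (4,2). -/
def Qform (x : Fin 6 → ℝ) : ℝ :=
  x 0 ^ 2 + x 1 ^ 2 + x 2 ^ 2 - x 3 ^ 2 + x 4 ^ 2 - x 5 ^ 2

/-- The bilinear form of signature (4,2). -/
def Qbil (x y : Fin 6 → ℝ) : ℝ :=
  x 0 * y 0 + x 1 * y 1 + x 2 * y 2 - x 3 * y 3 + x 4 * y 4 - x 5 * y 5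

/-- G = diag(1,1,-1,-1) as a function. -/
def Gv : Fin 4 → ℝ := ![1, 1, -1, -1]

/-- The pseudo-Hermitian form of signature (2,2) on ℂ⁴. -/
def herm (u v : Fin 4 → ℂ) : ℂ :=
  u 0 * starRingEnd ℂ (v 0) + u 1 * starRingEnd ℂ (v 1)
    - u 2 * starRingEnd ℂ (v 2) - u 3 * starRingEnd ℂ (v 3)

/-- The Levi-Civita symbol on four indices, ε^{0123} = 1. -/
noncomputable def eps (i j k l : Fin 4) : ℝ :=
  (((j : ℕ) : ℝ) - ((i : ℕ) : ℝ)) * (((k : ℕ) : ℝ) - ((i : ℕ) : ℝ)) *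
    (((l : ℕ) : ℝ) - ((i : ℕ) : ℝ)) * (((k : ℕ) : ℝ) - ((j : ℕ) : ℝ)) *
    (((l : ℕ) : ℝ) - ((j : ℕ) : ℝ)) * (((l : ℕ) : ℝ) - ((k : ℕ) : ℝ)) / 12

/-- The six antisymmetric matrices Σ₁,…,Σ₆ (indexed 0,…,5). -/
noncomputable def Sig : Fin 6 → Matrix (Fin 4) (Fin 4) ℂ
  | 0 => !![0, 0, -I, 0; 0, 0, 0, I; I, 0, 0, 0; 0, -I, 0, 0]
  | 1 => !![0, 0, -1, 0; 0, 0, 0, -1; 1, 0, 0, 0; 0, 1, 0, 0]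
  | 2 => !![0, 0, 0, I; 0, 0, I, 0; 0, -I, 0, 0; -I, 0, 0, 0]
  | 3 => !![0, I, 0, 0; -I, 0, 0, 0; 0, 0, 0, -I; 0, 0, I, 0]
  | 4 => !![0, 0, 0, 1; 0, 0, -1, 0; 0, 1, 0, 0; -1, 0, 0, 0]
  | 5 => !![0, 1, 0, 0; -1, 0, 0, 0; 0, 0, 0, 1; 0, 0, -1, 0]

/-- Σ(x) = Σ x^α Σ_α. -/
noncomputable def Sm (x : Fin 6 → ℝ) : Matrix (Fin 4) (Fin 4) ℂ :=
  ∑ α : Fin 6, (x α : ℂ) • Sig α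

/-- The antilinear Hodge star on antisymmetric 4×4 complex matrices. -/
noncomputable def hstar (A : Matrix (Fin 4) (Fin 4) ℂ) : Matrix (Fin 4) (Fin 4) ℂ :=
  Matrix.of fun i j =>
    (1 / 2 : ℂ) * ∑ k : Fin 4, ∑ l : Fin 4,
      ((eps i j k l : ℝ) : ℂ) * ((Gv k : ℝ) : ℂ) * ((Gv l : ℝ) : ℂ) * starRingEnd ℂ (A k l)

set_option maxHeartbeats 1000000 in
lemma Xm_eq (x : Fin 6 → ℝ) :
    Xm x =
    !![(0 : ℂ), (1 : ℂ) * (x 5 : ℂ) + ((1 : ℂ) * I) * (x 3 : ℂ), (1 : ℂ) * (x 1 : ℂ) + ((1 : ℂ) * I) * (x 0 : ℂ), (-1 : ℂ) * (x 4 : ℂ) + ((-1 : ℂ) * I) * (x 2 : ℂ);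
      (-1 : ℂ) * (x 5 : ℂ) + ((-1 : ℂ) * I) * (x 3 : ℂ), (0 : ℂ), (1 : ℂ) * (x 4 : ℂ) + ((-1 : ℂ) * I) * (x 2 : ℂ), (1 : ℂ) * (x 1 : ℂ) + ((-1 : ℂ) * I) * (x 0 : ℂ);
      (1 : ℂ) * (x 1 : ℂ) + ((1 : ℂ) * I) * (x 0 : ℂ), (1 : ℂ) * (x 4 : ℂ) + ((-1 : ℂ) * I) * (x 2 : ℂ), (0 : ℂ), (-1 : ℂ) * (x 5 : ℂ) + ((1 : ℂ) * I) * (x 3 : ℂ);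
      (-1 : ℂ) * (x 4 : ℂ) + ((-1 : ℂ) * I) * (x 2 : ℂ), (1 : ℂ) * (x 1 : ℂ) + ((-1 : ℂ) * I) * (x 0 : ℂ), (1 : ℂ) * (x 5 : ℂ) + ((-1 : ℂ) * I) * (x 3 : ℂ), (0 : ℂ)] := by
  ext i j
  fin_cases i <;> fin_cases j <;>
    simp [Xm, Gam, Fin.sum_univ_six, Matrix.sum_apply, Matrix.smul_apply, smul_eq_mul,
      Matrix.vecHead, Matrix.vecTail, Function.comp] <;>
    ring
set_option maxHeartbeats 2000000 in
lemma CX_mul (x x' : Fin 6 → ℝ) :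
    (Xm x).map (starRingEnd ℂ) * Xm x' =
    !![(-1 : ℂ) * (x 5 : ℂ) * (x' 5 : ℂ) + ((-1 : ℂ) * I) * (x 5 : ℂ) * (x' 3 : ℂ) + (1 : ℂ) * (x 4 : ℂ) * (x' 4 : ℂ) + ((1 : ℂ) * I) * (x 4 : ℂ) * (x' 2 : ℂ) + ((1 : ℂ) * I) * (x 3 : ℂ) * (x' 5 : ℂ) + (-1 : ℂ) * (x 3 : ℂ) * (x' 3 : ℂ) + ((-1 : ℂ) * I) * (x 2 : ℂ) * (x' 4 : ℂ) + (1 : ℂ) * (x 2 : ℂ) * (x' 2 : ℂ) + (1 : ℂ) * (x 1 : ℂ) * (x' 1 : ℂ) + ((1 : ℂ) * I) * (x 1 : ℂ) * (x' 0 : ℂ) + ((-1 : ℂ) * I) * (x 0 : ℂ) * (x' 1 : ℂ) + (1 : ℂ) * (x 0 : ℂ) * (x' 0 : ℂ), (-1 : ℂ) * (x 4 : ℂ) * (x' 1 : ℂ) + ((1 : ℂ) * I) * (x 4 : ℂ) * (x' 0 : ℂ) + ((1 : ℂ) * I) * (x 2 : ℂ) * (x' 1 : ℂ) + (1 : ℂ)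 * (x 2 : ℂ) * (x' 0 : ℂ) + (1 : ℂ) * (x 1 : ℂ) * (x' 4 : ℂ) + ((-1 : ℂ) * I) * (x 1 : ℂ) * (x' 2 : ℂ) + ((-1 : ℂ) * I) * (x 0 : ℂ) * (x' 4 : ℂ) + (-1 : ℂ) * (x 0 : ℂ) * (x' 2 : ℂ), (1 : ℂ) * (x 5 : ℂ) * (x' 4 : ℂ) + ((-1 : ℂ) * I) * (x 5 : ℂ) * (x' 2 : ℂ) + (-1 : ℂ) * (x 4 : ℂ) * (x' 5 : ℂ) + ((1 : ℂ) * I) * (x 4 : ℂ) * (x' 3 : ℂ) + ((-1 : ℂ) * I) * (x 3 : ℂ) * (x' 4 : ℂ) + (-1 : ℂ) * (x 3 : ℂ) * (x' 2 : ℂ) + ((1 : ℂ) * I) * (x 2 : ℂ) * (x' 5 : ℂ) + (1 : ℂ) * (x 2 : ℂ) * (x' 3 : ℂ), (1 : ℂ) * (x 5 : ℂ) * (x' 1 : ℂ) + ((-1 : ℂ) * I) * (x 5 : ℂ) * (x' 0 : ℂ) + ((-1 : ℂ) * I) * (x 3 : ℂ) * (x' 1 : ℂ) + (-1 : ℂ)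 * (x 3 : ℂ) * (x' 0 : ℂ) + (-1 : ℂ) * (x 1 : ℂ) * (x' 5 : ℂ) + ((1 : ℂ) * I) * (x 1 : ℂ) * (x' 3 : ℂ) + ((1 : ℂ) * I) * (x 0 : ℂ) * (x' 5 : ℂ) + (1 : ℂ) * (x 0 : ℂ) * (x' 3 : ℂ);
      (1 : ℂ) * (x 4 : ℂ) * (x' 1 : ℂ) + ((1 : ℂ) * I) * (x 4 : ℂ) * (x' 0 : ℂ) + ((1 : ℂ) * I) * (x 2 : ℂ) * (x' 1 : ℂ) + (-1 : ℂ) * (x 2 : ℂ) * (x' 0 : ℂ) + (-1 : ℂ) * (x 1 : ℂ) * (x' 4 : ℂ) + ((-1 : ℂ) * I) * (x 1 : ℂ) * (x' 2 : ℂ) + ((-1 : ℂ) * I) * (x 0 : ℂ) * (x' 4 : ℂ) + (1 : ℂ) * (x 0 : ℂ) * (x' 2 : ℂ), (-1 : ℂ) * (x 5 : ℂ) * (x' 5 : ℂ) + ((-1 : ℂ) * I) * (x 5 : ℂ) * (x' 3 : ℂ) + (1 : ℂ) * (x 4 : ℂ) * (x' 4 : ℂ) + ((-1 : ℂ) * I)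 * (x 4 : ℂ) * (x' 2 : ℂ) + ((1 : ℂ) * I) * (x 3 : ℂ) * (x' 5 : ℂ) + (-1 : ℂ) * (x 3 : ℂ) * (x' 3 : ℂ) + ((1 : ℂ) * I) * (x 2 : ℂ) * (x' 4 : ℂ) + (1 : ℂ) * (x 2 : ℂ) * (x' 2 : ℂ) + (1 : ℂ) * (x 1 : ℂ) * (x' 1 : ℂ) + ((-1 : ℂ) * I) * (x 1 : ℂ) * (x' 0 : ℂ) + ((1 : ℂ) * I) * (x 0 : ℂ) * (x' 1 : ℂ) + (1 : ℂ) * (x 0 : ℂ) * (x' 0 : ℂ), (-1 : ℂ) * (x 5 : ℂ) * (x' 1 : ℂ) + ((-1 : ℂ) * I) * (x 5 : ℂ) * (x' 0 : ℂ) + ((1 : ℂ) * I) * (x 3 : ℂ) * (x' 1 : ℂ) + (-1 : ℂ) * (x 3 : ℂ) * (x' 0 : ℂ) + (1 : ℂ) * (x 1 : ℂ) * (x' 5 : ℂ) + ((-1 : ℂ) * I) * (x 1 : ℂ) * (x' 3 : ℂ) + ((1 : ℂ) * I) * (x 0 : ℂ) * (x' 5 : ℂ) + (1 : ℂ) * (x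 0 : ℂ) * (x' 3 : ℂ), (1 : ℂ) * (x 5 : ℂ) * (x' 4 : ℂ) + ((1 : ℂ) * I) * (x 5 : ℂ) * (x' 2 : ℂ) + (-1 : ℂ) * (x 4 : ℂ) * (x' 5 : ℂ) + ((1 : ℂ) * I) * (x 4 : ℂ) * (x' 3 : ℂ) + ((-1 : ℂ) * I) * (x 3 : ℂ) * (x' 4 : ℂ) + (1 : ℂ) * (x 3 : ℂ) * (x' 2 : ℂ) + ((-1 : ℂ) * I) * (x 2 : ℂ) * (x' 5 : ℂ) + (-1 : ℂ) * (x 2 : ℂ) * (x' 3 : ℂ);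
      (1 : ℂ) * (x 5 : ℂ) * (x' 4 : ℂ) + ((1 : ℂ) * I) * (x 5 : ℂ) * (x' 2 : ℂ) + (-1 : ℂ) * (x 4 : ℂ) * (x' 5 : ℂ) + ((-1 : ℂ) * I) * (x 4 : ℂ) * (x' 3 : ℂ) + ((1 : ℂ) * I) * (x 3 : ℂ) * (x' 4 : ℂ) + (-1 : ℂ) * (x 3 : ℂ) * (x' 2 : ℂ) + ((-1 : ℂ) * I) * (x 2 : ℂ) * (x' 5 : ℂ) + (1 : ℂ) * (x 2 : ℂ) * (x' 3 : ℂ), (-1 : ℂ) * (x 5 : ℂ) * (x' 1 : ℂ) + ((1 : ℂ) * I) * (x 5 : ℂ) * (x' 0 : ℂ) + ((-1 : ℂ) * I) * (x 3 : ℂ) * (x' 1 : ℂ) + (-1 : ℂ) * (x 3 : ℂ) * (x' 0 : ℂ) + (1 : ℂ) * (x 1 : ℂ) * (x' 5 : ℂ) + ((1 : ℂ) * I) * (x 1 : ℂ) * (x' 3 : ℂ) + ((-1 : ℂ) * I) * (x 0 : ℂ) * (x' 5 : ℂ) + (1 : ℂ) * (x 0 : ℂ) * (x' 3 : ℂ),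 (-1 : ℂ) * (x 5 : ℂ) * (x' 5 : ℂ) + ((1 : ℂ) * I) * (x 5 : ℂ) * (x' 3 : ℂ) + (1 : ℂ) * (x 4 : ℂ) * (x' 4 : ℂ) + ((-1 : ℂ) * I) * (x 4 : ℂ) * (x' 2 : ℂ) + ((-1 : ℂ) * I) * (x 3 : ℂ) * (x' 5 : ℂ) + (-1 : ℂ) * (x 3 : ℂ) * (x' 3 : ℂ) + ((1 : ℂ) * I) * (x 2 : ℂ) * (x' 4 : ℂ) + (1 : ℂ) * (x 2 : ℂ) * (x' 2 : ℂ) + (1 : ℂ) * (x 1 : ℂ) * (x' 1 : ℂ) + ((1 : ℂ) * I) * (x 1 : ℂ) * (x' 0 : ℂ) + ((-1 : ℂ) * I) * (x 0 : ℂ) * (x' 1 : ℂ) + (1 : ℂ) * (x 0 : ℂ) * (x' 0 : ℂ), (1 : ℂ) * (x 4 : ℂ) * (x' 1 : ℂ) + ((-1 : ℂ) * I) * (x 4 : ℂ) * (x' 0 : ℂ) + ((1 : ℂ) * I) * (x 2 : ℂ) * (x' 1 : ℂ) + (1 : ℂ) * (x 2 : ℂ) * (x' 0 : ℂ) + (-1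 : ℂ) * (x 1 : ℂ) * (x' 4 : ℂ) + ((-1 : ℂ) * I) * (x 1 : ℂ) * (x' 2 : ℂ) + ((1 : ℂ) * I) * (x 0 : ℂ) * (x' 4 : ℂ) + (-1 : ℂ) * (x 0 : ℂ) * (x' 2 : ℂ);
      (1 : ℂ) * (x 5 : ℂ) * (x' 1 : ℂ) + ((1 : ℂ) * I) * (x 5 : ℂ) * (x' 0 : ℂ) + ((1 : ℂ) * I) * (x 3 : ℂ) * (x' 1 : ℂ) + (-1 : ℂ) * (x 3 : ℂ) * (x' 0 : ℂ) + (-1 : ℂ) * (x 1 : ℂ) * (x' 5 : ℂ) + ((-1 : ℂ) * I) * (x 1 : ℂ) * (x' 3 : ℂ) + ((-1 : ℂ) * I) * (x 0 : ℂ) * (x' 5 : ℂ) + (1 : ℂ) * (x 0 : ℂ) * (x' 3 : ℂ), (1 : ℂ) * (x 5 : ℂ) * (x' 4 : ℂ) + ((-1 : ℂ) * I) * (x 5 : ℂ) * (x' 2 : ℂ) + (-1 : ℂ) * (x 4 : ℂ) * (x' 5 : ℂ) + ((-1 : ℂ) * I) * (x 4 : ℂ) * (x' 3 : ℂ) + ((1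 : ℂ) * I) * (x 3 : ℂ) * (x' 4 : ℂ) + (1 : ℂ) * (x 3 : ℂ) * (x' 2 : ℂ) + ((1 : ℂ) * I) * (x 2 : ℂ) * (x' 5 : ℂ) + (-1 : ℂ) * (x 2 : ℂ) * (x' 3 : ℂ), (-1 : ℂ) * (x 4 : ℂ) * (x' 1 : ℂ) + ((-1 : ℂ) * I) * (x 4 : ℂ) * (x' 0 : ℂ) + ((1 : ℂ) * I) * (x 2 : ℂ) * (x' 1 : ℂ) + (-1 : ℂ) * (x 2 : ℂ) * (x' 0 : ℂ) + (1 : ℂ) * (x 1 : ℂ) * (x' 4 : ℂ) + ((-1 : ℂ) * I) * (x 1 : ℂ) * (x' 2 : ℂ) + ((1 : ℂ) * I) * (x 0 : ℂ) * (x' 4 : ℂ) + (1 : ℂ) * (x 0 : ℂ) * (x' 2 : ℂ), (-1 : ℂ) * (x 5 : ℂ) * (x' 5 : ℂ) + ((1 : ℂ) * I) * (x 5 : ℂ) * (x' 3 : ℂ) + (1 : ℂ) * (x 4 : ℂ) * (x' 4 : ℂ) + ((1 : ℂ) * I) * (x 4 : ℂ) * (x' 2 : ℂ) + ((-1 : ℂ)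 * I) * (x 3 : ℂ) * (x' 5 : ℂ) + (-1 : ℂ) * (x 3 : ℂ) * (x' 3 : ℂ) + ((-1 : ℂ) * I) * (x 2 : ℂ) * (x' 4 : ℂ) + (1 : ℂ) * (x 2 : ℂ) * (x' 2 : ℂ) + (1 : ℂ) * (x 1 : ℂ) * (x' 1 : ℂ) + ((-1 : ℂ) * I) * (x 1 : ℂ) * (x' 0 : ℂ) + ((1 : ℂ) * I) * (x 0 : ℂ) * (x' 1 : ℂ) + (1 : ℂ) * (x 0 : ℂ) * (x' 0 : ℂ)] := by
  rw [Xm_eq x, Xm_eq x']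
  ext i j
  fin_cases i <;> fin_cases j <;>
    (simp [Matrix.mul_apply, Fin.sum_univ_four, Matrix.map_apply, map_add, _root_.map_mul, map_neg,
      Matrix.vecHead, Matrix.vecTail, Complex.conj_ofReal, Complex.conj_I]
     <;> (try ring_nf) <;> (try simp only [Complex.I_sq]) <;> (try ring))
set_option maxHeartbeats 1000000 in
lemma CXX_zero (x : Fin 6 → ℝ) (hQ : Qform x = 0) :
    (Xm x).map (starRingEnd ℂ) * Xm x = 0 := by
  have hQr : x 0^2 + x 1^2 + x 2^2 - x 3^2 + x 4^2 - x 5^2 = 0 := by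
    simpa [Qform] using hQ
  have hQc : (x 0:ℂ)^2 + (x 1:ℂ)^2 + (x 2:ℂ)^2 - (x 3:ℂ)^2 + (x 4:ℂ)^2 - (x 5:ℂ)^2 = 0 := by
    have := congrArg (Complex.ofReal) hQr
    push_cast at this
    simpa using this
  rw [CX_mul]
  ext i j
  fin_cases i <;> fin_cases j <;>
    simp [Matrix.vecHead, Matrix.vecTail] <;>
    first
      | ring1
      | linear_combination hQc
      | linear_combination -hQc

lemma mul_eq_zero_of_range (A B Cc : Matrix (Fin 4) (Fin 4) ℂ) (hAB : A * B = 0)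
    (h : LinearMap.range Cc.mulVecLin ≤ LinearMap.range B.mulVecLin) : A * Cc = 0 := by
  have key : ∀ v, (A * Cc) *ᵥ v = 0 := by
    intro v
    obtain ⟨w, hw⟩ := h ⟨v, rfl⟩
    simp only [Matrix.mulVecLin_apply] at hw
    rw [← Matrix.mulVec_mulVec, ← hw, Matrix.mulVec_mulVec, hAB, Matrix.zero_mulVec]
  ext i j
  have h2 := congrFun (key (Pi.single j 1)) i
  rw [Matrix.mulVec_single] at h2
  simpa using h2

set_option maxHeartbeats 2000000 in
/-- Injectivity of the map ℝx ↦ S(x) = range X(x): nonzero null vectors with the same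
associated maximal totally isotropic subspace are real multiples of each other. -/
theorem isotropic_line_map_injective (x x' : Fin 6 → ℝ)
    (hx : x ≠ 0) (hx' : x' ≠ 0) (hQ : Qform x = 0) (hQ' : Qform x' = 0)
    (hrange : LinearMap.range (Xm x).mulVecLin = LinearMap.range (Xm x').mulVecLin) :
    ∃ l : ℝ, l ≠ 0 ∧ x' = l • x := by
  have h1 : (Xm x).map (starRingEnd ℂ) * Xm x' = 0 :=
    mul_eq_zero_of_range _ _ _ (CXX_zero x hQ) (le_of_eq hrange.symm)
  rw [CX_mul] at h1
  have e00 : (-1 : ℂ) * (x 5 : ℂ) * (x' 5 : ℂ) + ((-1 : ℂ) * I) * (x 5 : ℂ) * (x' 3 : ℂ) + (1 : ℂ) * (x 4 : ℂ) * (x' 4 : ℂ) + ((1 : ℂ) * I) * (x 4 : ℂ) * (x' 2 : ℂ) + ((1 : ℂ) * I) * (x 3 : ℂ) * (x' 5 : ℂ) + (-1 : ℂ) * (x 3 : ℂ) * (x' 3 : ℂ) + ((-1 : ℂ) * I) * (x 2 : ℂ) * (x' 4 : ℂ) + (1 : ℂ) * (x 2 : ℂ) * (x' 2 : ℂ) +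 (1 : ℂ) * (x 1 : ℂ) * (x' 1 : ℂ) + ((1 : ℂ) * I) * (x 1 : ℂ) * (x' 0 : ℂ) + ((-1 : ℂ) * I) * (x 0 : ℂ) * (x' 1 : ℂ) + (1 : ℂ) * (x 0 : ℂ) * (x' 0 : ℂ) = 0 := by
    simpa using Matrix.ext_iff.mpr h1 0 0
  have e01 : (-1 : ℂ) * (x 4 : ℂ) * (x' 1 : ℂ) + ((1 : ℂ) * I) * (x 4 : ℂ) * (x' 0 : ℂ) + ((1 : ℂ) * I) * (x 2 : ℂ) * (x' 1 : ℂ) + (1 : ℂ) * (x 2 : ℂ) * (x' 0 : ℂ) + (1 : ℂ) * (x 1 : ℂ) * (x' 4 : ℂ) + ((-1 : ℂ) * I) * (x 1 : ℂ) * (x' 2 : ℂ) + ((-1 : ℂ) * I) * (x 0 : ℂ) * (x' 4 : ℂ) + (-1 : ℂ) * (x 0 : ℂ) * (x' 2 : ℂ) = 0 := by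
    simpa using Matrix.ext_iff.mpr h1 0 1
  have e02 : (1 : ℂ) * (x 5 : ℂ) * (x' 4 : ℂ) + ((-1 : ℂ) * I) * (x 5 : ℂ) * (x' 2 : ℂ) + (-1 : ℂ) * (x 4 : ℂ) * (x' 5 : ℂ) + ((1 : ℂ) * I) * (x 4 : ℂ) * (x' 3 : ℂ) + ((-1 : ℂ) * I) * (x 3 : ℂ) * (x' 4 : ℂ) + (-1 : ℂ) * (x 3 : ℂ) * (x' 2 : ℂ) + ((1 : ℂ) * I) * (x 2 : ℂ) * (x' 5 : ℂ) + (1 : ℂ) * (x 2 : ℂ) * (x' 3 : ℂ) = 0 := by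
    simpa using Matrix.ext_iff.mpr h1 0 2
  have e03 : (1 : ℂ) * (x 5 : ℂ) * (x' 1 : ℂ) + ((-1 : ℂ) * I) * (x 5 : ℂ) * (x' 0 : ℂ) + ((-1 : ℂ) * I) * (x 3 : ℂ) * (x' 1 : ℂ) + (-1 : ℂ) * (x 3 : ℂ) * (x' 0 : ℂ) + (-1 : ℂ) * (x 1 : ℂ) * (x' 5 : ℂ) + ((1 : ℂ) * I) * (x 1 : ℂ) * (x' 3 : ℂ) + ((1 : ℂ) * I) * (x 0 : ℂ) * (x' 5 : ℂ) + (1 : ℂ) * (x 0 : ℂ) * (x' 3 : ℂ) = 0 := by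
    simpa using Matrix.ext_iff.mpr h1 0 3
  have e10 : (1 : ℂ) * (x 4 : ℂ) * (x' 1 : ℂ) + ((1 : ℂ) * I) * (x 4 : ℂ) * (x' 0 : ℂ) + ((1 : ℂ) * I) * (x 2 : ℂ) * (x' 1 : ℂ) + (-1 : ℂ) * (x 2 : ℂ) * (x' 0 : ℂ) + (-1 : ℂ) * (x 1 : ℂ) * (x' 4 : ℂ) + ((-1 : ℂ) * I) * (x 1 : ℂ) * (x' 2 : ℂ) + ((-1 : ℂ) * I) * (x 0 : ℂ) * (x' 4 : ℂ) + (1 : ℂ) * (x 0 : ℂ) * (x' 2 : ℂ) = 0 := by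
    simpa using Matrix.ext_iff.mpr h1 1 0
  have e11 : (-1 : ℂ) * (x 5 : ℂ) * (x' 5 : ℂ) + ((-1 : ℂ) * I) * (x 5 : ℂ) * (x' 3 : ℂ) + (1 : ℂ) * (x 4 : ℂ) * (x' 4 : ℂ) + ((-1 : ℂ) * I) * (x 4 : ℂ) * (x' 2 : ℂ) + ((1 : ℂ) * I) * (x 3 : ℂ) * (x' 5 : ℂ) + (-1 : ℂ) * (x 3 : ℂ) * (x' 3 : ℂ) + ((1 : ℂ) * I) * (x 2 : ℂ) * (x' 4 : ℂ) + (1 : ℂ) * (x 2 : ℂ) * (x' 2 : ℂ) + (1 : ℂ) * (x 1 : ℂ) * (x' 1 : ℂ) + ((-1 : ℂ) * I) * (x 1 : ℂ) * (x' 0 : ℂ) + ((1 : ℂ) * I) * (x 0 : ℂ) * (x' 1 : ℂ) + (1 : ℂ) * (x 0 : ℂ) * (x' 0 : ℂ) = 0 := by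
    simpa using Matrix.ext_iff.mpr h1 1 1
  have e12 : (-1 : ℂ) * (x 5 : ℂ) * (x' 1 : ℂ) + ((-1 : ℂ) * I) * (x 5 : ℂ) * (x' 0 : ℂ) + ((1 : ℂ) * I) * (x 3 : ℂ) * (x' 1 : ℂ) + (-1 : ℂ) * (x 3 : ℂ) * (x' 0 : ℂ) + (1 : ℂ) * (x 1 : ℂ) * (x' 5 : ℂ) + ((-1 : ℂ) * I) * (x 1 : ℂ) * (x' 3 : ℂ) + ((1 : ℂ) * I) * (x 0 : ℂ) * (x' 5 : ℂ) + (1 : ℂ) * (x 0 : ℂ) * (x' 3 : ℂ) = 0 := by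
    simpa using Matrix.ext_iff.mpr h1 1 2
  have e13 : (1 : ℂ) * (x 5 : ℂ) * (x' 4 : ℂ) + ((1 : ℂ) * I) * (x 5 : ℂ) * (x' 2 : ℂ) + (-1 : ℂ) * (x 4 : ℂ) * (x' 5 : ℂ) + ((1 : ℂ) * I) * (x 4 : ℂ) * (x' 3 : ℂ) + ((-1 : ℂ) * I) * (x 3 : ℂ) * (x' 4 : ℂ) + (1 : ℂ) * (x 3 : ℂ) * (x' 2 : ℂ) + ((-1 : ℂ) * I) * (x 2 : ℂ) * (x' 5 : ℂ) + (-1 : ℂ) * (x 2 : ℂ) * (x' 3 : ℂ) = 0 := by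
    simpa using Matrix.ext_iff.mpr h1 1 3
  have e20 : (1 : ℂ) * (x 5 : ℂ) * (x' 4 : ℂ) + ((1 : ℂ) * I) * (x 5 : ℂ) * (x' 2 : ℂ) + (-1 : ℂ) * (x 4 : ℂ) * (x' 5 : ℂ) + ((-1 : ℂ) * I) * (x 4 : ℂ) * (x' 3 : ℂ) + ((1 : ℂ) * I) * (x 3 : ℂ) * (x' 4 : ℂ) + (-1 : ℂ) * (x 3 : ℂ) * (x' 2 : ℂ) + ((-1 : ℂ) * I) * (x 2 : ℂ) * (x' 5 : ℂ) + (1 : ℂ) * (x 2 : ℂ) * (x' 3 : ℂ) = 0 := by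
    simpa using Matrix.ext_iff.mpr h1 2 0
  have e21 : (-1 : ℂ) * (x 5 : ℂ) * (x' 1 : ℂ) + ((1 : ℂ) * I) * (x 5 : ℂ) * (x' 0 : ℂ) + ((-1 : ℂ) * I) * (x 3 : ℂ) * (x' 1 : ℂ) + (-1 : ℂ) * (x 3 : ℂ) * (x' 0 : ℂ) + (1 : ℂ) * (x 1 : ℂ) * (x' 5 : ℂ) + ((1 : ℂ) * I) * (x 1 : ℂ) * (x' 3 : ℂ) + ((-1 : ℂ) * I) * (x 0 : ℂ) * (x' 5 : ℂ) + (1 : ℂ) * (x 0 : ℂ) * (x' 3 : ℂ) = 0 := by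
    simpa using Matrix.ext_iff.mpr h1 2 1
  have e22 : (-1 : ℂ) * (x 5 : ℂ) * (x' 5 : ℂ) + ((1 : ℂ) * I) * (x 5 : ℂ) * (x' 3 : ℂ) + (1 : ℂ) * (x 4 : ℂ) * (x' 4 : ℂ) + ((-1 : ℂ) * I) * (x 4 : ℂ) * (x' 2 : ℂ) + ((-1 : ℂ) * I) * (x 3 : ℂ) * (x' 5 : ℂ) + (-1 : ℂ) * (x 3 : ℂ) * (x' 3 : ℂ) + ((1 : ℂ) * I) * (x 2 : ℂ) * (x' 4 : ℂ) + (1 : ℂ) * (x 2 : ℂ) * (x' 2 : ℂ) + (1 : ℂ) * (x 1 : ℂ) * (x' 1 : ℂ) + ((1 : ℂ) * I) * (x 1 : ℂ) * (x' 0 : ℂ) + ((-1 : ℂ) * I) * (x 0 : ℂ) * (x' 1 : ℂ) + (1 : ℂ) * (x 0 : ℂ) * (x' 0 : ℂ) = 0 := by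
    simpa using Matrix.ext_iff.mpr h1 2 2
  have e23 : (1 : ℂ) * (x 4 : ℂ) * (x' 1 : ℂ) + ((-1 : ℂ) * I) * (x 4 : ℂ) * (x' 0 : ℂ) + ((1 : ℂ) * I) * (x 2 : ℂ) * (x' 1 : ℂ) + (1 : ℂ) * (x 2 : ℂ) * (x' 0 : ℂ) + (-1 : ℂ) * (x 1 : ℂ) * (x' 4 : ℂ) + ((-1 : ℂ) * I) * (x 1 : ℂ) * (x' 2 : ℂ) + ((1 : ℂ) * I) * (x 0 : ℂ) * (x' 4 : ℂ) + (-1 : ℂ) * (x 0 : ℂ) * (x' 2 : ℂ) = 0 := by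
    simpa using Matrix.ext_iff.mpr h1 2 3
  have e30 : (1 : ℂ) * (x 5 : ℂ) * (x' 1 : ℂ) + ((1 : ℂ) * I) * (x 5 : ℂ) * (x' 0 : ℂ) + ((1 : ℂ) * I) * (x 3 : ℂ) * (x' 1 : ℂ) + (-1 : ℂ) * (x 3 : ℂ) * (x' 0 : ℂ) + (-1 : ℂ) * (x 1 : ℂ) * (x' 5 : ℂ) + ((-1 : ℂ) * I) * (x 1 : ℂ) * (x' 3 : ℂ) + ((-1 : ℂ) * I) * (x 0 : ℂ) * (x' 5 : ℂ) + (1 : ℂ) * (x 0 : ℂ) * (x' 3 : ℂ) = 0 := by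
    simpa using Matrix.ext_iff.mpr h1 3 0
  have e31 : (1 : ℂ) * (x 5 : ℂ) * (x' 4 : ℂ) + ((-1 : ℂ) * I) * (x 5 : ℂ) * (x' 2 : ℂ) + (-1 : ℂ) * (x 4 : ℂ) * (x' 5 : ℂ) + ((-1 : ℂ) * I) * (x 4 : ℂ) * (x' 3 : ℂ) + ((1 : ℂ) * I) * (x 3 : ℂ) * (x' 4 : ℂ) + (1 : ℂ) * (x 3 : ℂ) * (x' 2 : ℂ) + ((1 : ℂ) * I) * (x 2 : ℂ) * (x' 5 : ℂ) + (-1 : ℂ) * (x 2 : ℂ) * (x' 3 : ℂ) = 0 := by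
    simpa using Matrix.ext_iff.mpr h1 3 1
  have e32 : (-1 : ℂ) * (x 4 : ℂ) * (x' 1 : ℂ) + ((-1 : ℂ) * I) * (x 4 : ℂ) * (x' 0 : ℂ) + ((1 : ℂ) * I) * (x 2 : ℂ) * (x' 1 : ℂ) + (-1 : ℂ) * (x 2 : ℂ) * (x' 0 : ℂ) + (1 : ℂ) * (x 1 : ℂ) * (x' 4 : ℂ) + ((-1 : ℂ) * I) * (x 1 : ℂ) * (x' 2 : ℂ) + ((1 : ℂ) * I) * (x 0 : ℂ) * (x' 4 : ℂ) + (1 : ℂ) * (x 0 : ℂ) * (x' 2 : ℂ) = 0 := by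
    simpa using Matrix.ext_iff.mpr h1 3 2
  have e33 : (-1 : ℂ) * (x 5 : ℂ) * (x' 5 : ℂ) + ((1 : ℂ) * I) * (x 5 : ℂ) * (x' 3 : ℂ) + (1 : ℂ) * (x 4 : ℂ) * (x' 4 : ℂ) + ((1 : ℂ) * I) * (x 4 : ℂ) * (x' 2 : ℂ) + ((-1 : ℂ) * I) * (x 3 : ℂ) * (x' 5 : ℂ) + (-1 : ℂ) * (x 3 : ℂ) * (x' 3 : ℂ) + ((-1 : ℂ) * I) * (x 2 : ℂ) * (x' 4 : ℂ) + (1 : ℂ) * (x 2 : ℂ) * (x' 2 : ℂ) + (1 : ℂ) * (x 1 : ℂ) * (x' 1 : ℂ) + ((-1 : ℂ) * I) * (x 1 : ℂ) * (x' 0 : ℂ) + ((1 : ℂ) * I) * (x 0 : ℂ) * (x' 1 : ℂ) + (1 : ℂ) * (x 0 : ℂ) * (x' 0 : ℂ) = 0 := by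
    simpa using Matrix.ext_iff.mpr h1 3 3
  have m01 : (x 0 : ℂ) * (x' 1 : ℂ) - (x 1 : ℂ) * (x' 0 : ℂ) = 0 := by
    linear_combination (((1/4) : ℂ) * I) * e00 + (((-1/4) : ℂ) * I) * e11 + (((1/4) : ℂ) * I) * e22 + (((-1/4) : ℂ) * I) * e33 + ((-1 : ℂ) * (x 1 : ℂ) * (x' 0 : ℂ) + (1 : ℂ) * (x 0 : ℂ) * (x' 1 : ℂ)) * Complex.I_sq
  have m02 : (x 0 : ℂ) * (x' 2 : ℂ) - (x 2 : ℂ) * (x' 0 : ℂ) = 0 := by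
    linear_combination (((-1/4) : ℂ)) * e01 + (((1/4) : ℂ)) * e10 + (((-1/4) : ℂ)) * e23 + (((1/4) : ℂ)) * e32
  have m03 : (x 0 : ℂ) * (x' 3 : ℂ) - (x 3 : ℂ) * (x' 0 : ℂ) = 0 := by
    linear_combination (((1/4) : ℂ)) * e03 + (((1/4) : ℂ)) * e12 + (((1/4) : ℂ)) * e21 + (((1/4) : ℂ)) * e30
  have m04 : (x 0 : ℂ) * (x' 4 : ℂ) - (x 4 : ℂ) * (x' 0 : ℂ) = 0 := by
    linear_combination (((1/4) : ℂ) * I) * e01 + (((1/4) : ℂ) * I) * e10 + (((-1/4) : ℂ) * I) * e23 + (((-1/4) : ℂ) * I) * e32 + ((-1 : ℂ) * (x 4 : ℂ) * (x' 0 : ℂ) + (1 : ℂ) * (x 0 : ℂ) * (x' 4 : ℂ)) * Complex.I_sq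
  have m05 : (x 0 : ℂ) * (x' 5 : ℂ) - (x 5 : ℂ) * (x' 0 : ℂ) = 0 := by
    linear_combination (((-1/4) : ℂ) * I) * e03 + (((-1/4) : ℂ) * I) * e12 + (((1/4) : ℂ) * I) * e21 + (((1/4) : ℂ) * I) * e30 + ((-1 : ℂ) * (x 5 : ℂ) * (x' 0 : ℂ) + (1 : ℂ) * (x 0 : ℂ) * (x' 5 : ℂ)) * Complex.I_sq
  have m12 : (x 1 : ℂ) * (x' 2 : ℂ) - (x 2 : ℂ) * (x' 1 : ℂ) = 0 := by
    linear_combination (((1/4) : ℂ) * I) * e01 + (((1/4) : ℂ) * I) * e10 + (((1/4) : ℂ) * I) * e23 + (((1/4) : ℂ) * I) * e32 + ((-1 : ℂ) * (x 2 : ℂ) * (x' 1 : ℂ) + (1 : ℂ) * (x 1 : ℂ) * (x' 2 : ℂ)) * Complex.I_sq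
  have m13 : (x 1 : ℂ) * (x' 3 : ℂ) - (x 3 : ℂ) * (x' 1 : ℂ) = 0 := by
    linear_combination (((-1/4) : ℂ) * I) * e03 + (((1/4) : ℂ) * I) * e12 + (((-1/4) : ℂ) * I) * e21 + (((1/4) : ℂ) * I) * e30 + ((-1 : ℂ) * (x 3 : ℂ) * (x' 1 : ℂ) + (1 : ℂ) * (x 1 : ℂ) * (x' 3 : ℂ)) * Complex.I_sq
  have m14 : (x 1 : ℂ) * (x' 4 : ℂ) - (x 4 : ℂ) * (x' 1 : ℂ) = 0 := by
    linear_combination (((1/4) : ℂ)) * e01 + (((-1/4) : ℂ)) * e10 + (((-1/4) : ℂ)) * e23 + (((1/4) : ℂ)) * e32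
  have m15 : (x 1 : ℂ) * (x' 5 : ℂ) - (x 5 : ℂ) * (x' 1 : ℂ) = 0 := by
    linear_combination (((-1/4) : ℂ)) * e03 + (((1/4) : ℂ)) * e12 + (((1/4) : ℂ)) * e21 + (((-1/4) : ℂ)) * e30
  have m23 : (x 2 : ℂ) * (x' 3 : ℂ) - (x 3 : ℂ) * (x' 2 : ℂ) = 0 := by
    linear_combination (((1/4) : ℂ)) * e02 + (((-1/4) : ℂ)) * e13 + (((1/4) : ℂ)) * e20 + (((-1/4) : ℂ)) * e31
  have m24 : (x 2 : ℂ) * (x' 4 : ℂ) - (x 4 : ℂ) * (x' 2 : ℂ) = 0 := by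
    linear_combination (((1/4) : ℂ) * I) * e00 + (((-1/4) : ℂ) * I) * e11 + (((-1/4) : ℂ) * I) * e22 + (((1/4) : ℂ) * I) * e33 + ((-1 : ℂ) * (x 4 : ℂ) * (x' 2 : ℂ) + (1 : ℂ) * (x 2 : ℂ) * (x' 4 : ℂ)) * Complex.I_sq
  have m25 : (x 2 : ℂ) * (x' 5 : ℂ) - (x 5 : ℂ) * (x' 2 : ℂ) = 0 := by
    linear_combination (((-1/4) : ℂ) * I) * e02 + (((1/4) : ℂ) * I) * e13 + (((1/4) : ℂ) * I) * e20 + (((-1/4) : ℂ) * I) * e31 + ((-1 : ℂ) * (x 5 : ℂ) * (x' 2 : ℂ) + (1 : ℂ) * (x 2 : ℂ) * (x' 5 : ℂ)) * Complex.I_sq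
  have m34 : (x 3 : ℂ) * (x' 4 : ℂ) - (x 4 : ℂ) * (x' 3 : ℂ) = 0 := by
    linear_combination (((1/4) : ℂ) * I) * e02 + (((1/4) : ℂ) * I) * e13 + (((-1/4) : ℂ) * I) * e20 + (((-1/4) : ℂ) * I) * e31 + ((-1 : ℂ) * (x 4 : ℂ) * (x' 3 : ℂ) + (1 : ℂ) * (x 3 : ℂ) * (x' 4 : ℂ)) * Complex.I_sq
  have m35 : (x 3 : ℂ) * (x' 5 : ℂ) - (x 5 : ℂ) * (x' 3 : ℂ) = 0 := by
    linear_combination (((-1/4) : ℂ) * I) * e00 + (((-1/4) : ℂ) * I) * e11 + (((1/4) : ℂ) * I) * e22 + (((1/4) : ℂ) * I) * e33 + ((-1 : ℂ) * (x 5 : ℂ) * (x' 3 : ℂ) + (1 : ℂ) * (x 3 : ℂ) * (x' 5 : ℂ)) * Complex.I_sq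
  have m45 : (x 4 : ℂ) * (x' 5 : ℂ) - (x 5 : ℂ) * (x' 4 : ℂ) = 0 := by
    linear_combination (((-1/4) : ℂ)) * e02 + (((-1/4) : ℂ)) * e13 + (((-1/4) : ℂ)) * e20 + (((-1/4) : ℂ)) * e31
  have r01 : x 0 * x' 1 = x 1 * x' 0 := by
    exact_mod_cast sub_eq_zero.mp m01
  have r02 : x 0 * x' 2 = x 2 * x' 0 := by
    exact_mod_cast sub_eq_zero.mp m02
  have r03 : x 0 * x' 3 = x 3 * x' 0 := by
    exact_mod_cast sub_eq_zero.mp m03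
  have r04 : x 0 * x' 4 = x 4 * x' 0 := by
    exact_mod_cast sub_eq_zero.mp m04
  have r05 : x 0 * x' 5 = x 5 * x' 0 := by
    exact_mod_cast sub_eq_zero.mp m05
  have r12 : x 1 * x' 2 = x 2 * x' 1 := by
    exact_mod_cast sub_eq_zero.mp m12
  have r13 : x 1 * x' 3 = x 3 * x' 1 := by
    exact_mod_cast sub_eq_zero.mp m13
  have r14 : x 1 * x' 4 = x 4 * x' 1 := by
    exact_mod_cast sub_eq_zero.mp m14
  have r15 : x 1 * x' 5 = x 5 * x' 1 := by
    exact_mod_cast sub_eq_zero.mp m15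
  have r23 : x 2 * x' 3 = x 3 * x' 2 := by
    exact_mod_cast sub_eq_zero.mp m23
  have r24 : x 2 * x' 4 = x 4 * x' 2 := by
    exact_mod_cast sub_eq_zero.mp m24
  have r25 : x 2 * x' 5 = x 5 * x' 2 := by
    exact_mod_cast sub_eq_zero.mp m25
  have r34 : x 3 * x' 4 = x 4 * x' 3 := by
    exact_mod_cast sub_eq_zero.mp m34
  have r35 : x 3 * x' 5 = x 5 * x' 3 := by
    exact_mod_cast sub_eq_zero.mp m35
  have r45 : x 4 * x' 5 = x 5 * x' 4 := by
    exact_mod_cast sub_eq_zero.mp m45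
  obtain ⟨a, ha⟩ : ∃ a, x a ≠ 0 := by
    by_contra h
    push_neg at h
    exact hx (funext h)
  have hab : ∀ b, x a * x' b = x b * x' a := by
    intro b
    fin_cases a <;> fin_cases b <;>
      first
        | rfl
        | exact mul_comm _ _
        | exact r01
        | exact (r01).symm
        | exact r02
        | exact (r02).symm
        | exact r03
        | exact (r03).symm
        | exact r04
        | exact (r04).symm
        | exact r05
        | exact (r05).symm
        | exact r12
        | exact (r12).symm
        | exact r13
        | exact (r13).symm
        | exact r14
        | exact (r14).symm
        | exact r15
        | exact (r15).symm
        | exact r23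
        | exact (r23).symm
        | exact r24
        | exact (r24).symm
        | exact r25
        | exact (r25).symm
        | exact r34
        | exact (r34).symm
        | exact r35
        | exact (r35).symm
        | exact r45
        | exact (r45).symm
  have hs : x' = (x' a / x a) • x := by
    funext b
    rw [Pi.smul_apply, smul_eq_mul]
    field_simp
    first
      | linear_combination hab b
      | linear_combination - hab b
  refine ⟨x' a / x a, ?_, hs⟩
  intro h0
  apply hx'
  rw [hs, h0, zero_smul]
end

section
/- The assignment of isotropic lines to maximal totally isotropic subspaces is surjective: for every complex subspace S ⊆ ℂ⁴ of complex dimension 2 which is totally isotropic with respect to the pseudo-Hermitian form ((u|w) = 0 for all u, w ∈ S), there exists a nonzero x ∈ ℝ⁶ with Q(x) = 0 such that S = range X(x). -/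
open Matrix Complex

/-!
A totally isotropic plane `S ⊆ ℂ^{2,2}` meets `span(e₂, e₃)` trivially, because the form is
negative definite there. Hence `S` is the graph of a `2 × 2` matrix `[[a, c], [b, d]]` over
`span(e₀, e₁)`, with basis `u = (1, 0, a, b)`, `w = (0, 1, c, d)`, and isotropy says exactly that
this matrix is unitary; in particular `d = δ ā` and `c = -δ b̄` for its determinant `δ`, `|δ| = 1`.

The range of the bivector matrix `u wᵀ - w uᵀ` is `S`, and stays `S` after multiplying on the
right by the invertible diagonal matrix `μ G`. Choosing `μ ≠ 0` with `μ̄ = μ δ`, the unitarity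
relations turn `(u wᵀ - w uᵀ) μ G` into a matrix of the shape `X(x)`, whose first row
`(0, μ, -μc, -μd)` determines `x`; then `Q(x) = |μ|² (|c|² + |d|² - 1) = 0`.
-/

open ComplexConjugate

section

variable {n : Type*}

def wedge {R : Type*} [CommRing R] (u w : n → R) : Matrix n n R :=
  vecMulVec u w - vecMulVec w u

lemma wedge_mulVec {R : Type*} [CommRing R] [Fintype n] (u w v : n → R) :
    wedge u w *ᵥ v = (w ⬝ᵥ v) • u - (u ⬝ᵥ v) • w := by
  simp only [wedge, sub_mulVec, vecMulVec_mulVec, op_smul_eq_smul]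

variable {K : Type*} [Field K] [Fintype n] [DecidableEq n]

lemma range_mulVecLin_wedge {u w : n → K} {p q : n} (h : u p * w q - u q * w p ≠ 0) :
    LinearMap.range (wedge u w).mulVecLin = Submodule.span K {u, w} := by
  have hpair : ∀ α β : K, wedge u w *ᵥ (Pi.single p α + Pi.single q β) =
      (w p * α + w q * β) • u - (u p * α + u q * β) • w := by
    intro α β
    simp only [wedge_mulVec, dotProduct_add, dotProduct_single]
  apply le_antisymm
  · rintro _ ⟨v, rfl⟩
    exact Submodule.mem_span_pair.2 ⟨w ⬝ᵥ v, -(u ⬝ᵥ v), by simp [wedge_mulVec, sub_eq_add_neg]⟩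
  · rw [Submodule.span_le, Set.insert_subset_iff, Set.singleton_subset_iff]
    set m := u p * w q - u q * w p
    constructor
    · refine ⟨Pi.single p (-u q / m) + Pi.single q (u p / m), ?_⟩
      have hw : w p * (-u q / m) + w q * (u p / m) = 1 := by field_simp; ring
      have hu : u p * (-u q / m) + u q * (u p / m) = 0 := by ring
      rw [mulVecLin_apply, hpair, hw, hu, one_smul, zero_smul, sub_zero]
    · refine ⟨Pi.single p (-w q / m) + Pi.single q (w p / m), ?_⟩
      have hw : w p * (-w q / m) + w q * (w p / m) = 0 := by ring
      have hu : u p * (-w q / m) + u q * (w p / m) = -1 := by field_simp; ring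
      rw [mulVecLin_apply, hpair, hw, hu, zero_smul, zero_sub, neg_smul, one_smul, neg_neg]

lemma range_mulVecLin_mul_diagonal {m : Type*} (A : Matrix m n K) {g : n → K}
    (hg : ∀ j, g j ≠ 0) :
    LinearMap.range (A * diagonal g).mulVecLin = LinearMap.range A.mulVecLin := by
  rw [mulVecLin_mul, LinearMap.range_comp_of_range_eq_top]
  rw [LinearMap.range_eq_top]
  intro v
  exact ⟨fun j => v j / g j, by ext j; simp [mulVec_diagonal, mul_div_cancel₀ _ (hg j)]⟩

end

def ofFirstRow (t z y : ℂ) : Fin 6 → ℝ := ![z.im, z.re, -y.im, t.im, -y.re, t.re]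

lemma Xm_ofFirstRow (t z y : ℂ) :
    Xm (ofFirstRow t z y) =
      !![0, t, z, y; -t, 0, -conj y, conj z; z, -conj y, 0, -conj t; y, conj z, conj t, 0] := by
  ext i j
  fin_cases i <;> fin_cases j <;> simp [Xm, Gam, ofFirstRow, Fin.sum_univ_six, Complex.ext_iff]

lemma Qform_ofFirstRow (t z y : ℂ) :
    Qform (ofFirstRow t z y) = normSq z + normSq y - normSq t := by
  simp only [Qform, ofFirstRow, cons_val_zero, cons_val_one, cons_val, even_two, Even.neg_pow,
    normSq_apply]
  ring

lemma ofFirstRow_ne_zero {t : ℂ} (ht : t ≠ 0) (z y : ℂ) : ofFirstRow t z y ≠ 0 := by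
  intro h
  apply ht
  apply Complex.ext
  · simpa [ofFirstRow] using congrFun h 5
  · simpa [ofFirstRow] using congrFun h 3

lemma herm_self (s : Fin 4 → ℂ) :
    herm s s = ((normSq (s 0) + normSq (s 1) - normSq (s 2) - normSq (s 3) : ℝ) : ℂ) := by
  simp [herm, mul_conj]

lemma eq_zero_of_herm_self_eq_zero {s : Fin 4 → ℂ} (h : herm s s = 0) (h0 : s 0 = 0)
    (h1 : s 1 = 0) : s = 0 := by
  rw [herm_self, h0, h1, map_zero] at h
  have h23 : normSq (s 2) + normSq (s 3) = 0 := by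
    have : 0 + 0 - normSq (s 2) - normSq (s 3) = 0 := by exact_mod_cast h
    linarith
  rw [add_eq_zero_iff_of_nonneg (normSq_nonneg _) (normSq_nonneg _), normSq_eq_zero,
    normSq_eq_zero] at h23
  ext i
  fin_cases i <;> simp [h0, h1, h23]

lemma exists_eq_span_graph {S : Submodule ℂ (Fin 4 → ℂ)} (hdim : Module.finrank ℂ S = 2)
    (hiso : ∀ s ∈ S, herm s s = 0) :
    ∃ a b c d : ℂ, S = Submodule.span ℂ {![1, 0, a, b], ![0, 1, c, d]} := by
  have hker : ∀ s ∈ S, s 0 = 0 → s 1 = 0 → s = 0 := fun s hs =>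
    eq_zero_of_herm_self_eq_zero (hiso s hs)
  let π : S →ₗ[ℂ] Fin 2 → ℂ := LinearMap.funLeft ℂ ℂ (Fin.castLE (by norm_num)) ∘ₗ S.subtype
  have hπ : Function.Surjective π := by
    refine (LinearMap.injective_iff_surjective_of_finrank_eq_finrank (by simp [hdim])).1 ?_
    rw [← LinearMap.ker_eq_bot, LinearMap.ker_eq_bot']
    intro s hs
    exact Subtype.ext (hker s s.2 (congrFun hs 0) (congrFun hs 1))
  obtain ⟨⟨u, hu⟩, hπu⟩ := hπ ![1, 0]
  obtain ⟨⟨w, hw⟩, hπw⟩ := hπ ![0, 1]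
  have hu0 : u 0 = 1 := congrFun hπu 0
  have hu1 : u 1 = 0 := congrFun hπu 1
  have hw0 : w 0 = 0 := congrFun hπw 0
  have hw1 : w 1 = 1 := congrFun hπw 1
  have hu_eq : ![1, 0, u 2, u 3] = u := by ext i; fin_cases i <;> simp [hu0, hu1]
  have hw_eq : ![0, 1, w 2, w 3] = w := by ext i; fin_cases i <;> simp [hw0, hw1]
  refine ⟨u 2, u 3, w 2, w 3, ?_⟩
  rw [hu_eq, hw_eq]
  refine le_antisymm (fun s hs => Submodule.mem_span_pair.2 ⟨s 0, s 1, ?_⟩) ?_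
  · have hrest : s - (s 0 • u + s 1 • w) ∈ S :=
      S.sub_mem hs (S.add_mem (S.smul_mem _ hu) (S.smul_mem _ hw))
    exact (sub_eq_zero.1 (hker _ hrest (by simp [hu0, hw0]) (by simp [hu1, hw1]))).symm
  · rw [Submodule.span_le, Set.insert_subset_iff, Set.singleton_subset_iff]
    exact ⟨hu, hw⟩

lemma unitary_of_isotropic_graph {a b c d : ℂ} (huu : herm ![1, 0, a, b] ![1, 0, a, b] = 0)
    (hww : herm ![0, 1, c, d] ![0, 1, c, d] = 0) (huw : herm ![1, 0, a, b] ![0, 1, c, d] = 0) :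
    a * conj a + b * conj b = 1 ∧ c * conj c + d * conj d = 1 ∧ a * conj c + b * conj d = 0 := by
  simp only [herm, cons_val_zero, cons_val_one, cons_val, map_one, map_zero, mul_one, mul_zero,
    add_zero, zero_add, zero_sub] at huu hww huw
  exact ⟨by linear_combination -huu, by linear_combination -hww, by linear_combination -huw⟩

lemma exists_ne_zero_conj_eq_mul {δ : ℂ} (hδ : δ * conj δ = 1) : ∃ μ ≠ 0, conj μ = μ * δ := by
  by_cases h : δ = -1
  · exact ⟨I, I_ne_zero, by simp [h]⟩
  · refine ⟨1 + conj δ, fun h0 => h ?_, ?_⟩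
    · simpa using congrArg conj (eq_neg_of_add_eq_zero_right h0)
    · simp only [map_add, map_one, conj_conj]
      linear_combination -hδ

lemma exists_phase_of_unitary {a b c d : ℂ} (hab : a * conj a + b * conj b = 1)
    (hcd : c * conj c + d * conj d = 1) (horth : a * conj c + b * conj d = 0) :
    ∃ μ ≠ 0, conj μ = μ * (a * d - b * c) ∧ conj (μ * d) = μ * a ∧ conj (μ * c) = -(μ * b) := by
  set δ := a * d - b * c with hδdef
  have horth' : conj a * c + conj b * d = 0 := by simpa using congrArg conj horth
  have hd : d = δ * conj a := by linear_combination b * horth' - d * hab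
  have hc : c = -(δ * conj b) := by linear_combination a * horth' - c * hab
  have hδ : δ * conj δ = 1 := by
    rw [hδdef, map_sub, map_mul, map_mul, ← hδdef]
    linear_combination -conj d * hd - conj c * hc + hcd
  have hd' : conj d = conj δ * a := by rw [hd]; simp
  have hc' : conj c = -(conj δ * b) := by rw [hc]; simp
  obtain ⟨μ, hμ0, hμ⟩ := exists_ne_zero_conj_eq_mul hδ
  refine ⟨μ, hμ0, hμ, ?_, ?_⟩
  · rw [map_mul, hμ]
    linear_combination μ * a * hδ + μ * δ * hd'
  · rw [map_mul, hμ]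
    linear_combination μ * δ * hc' - μ * b * hδ

lemma Xm_ofFirstRow_eq_wedge {a b c d μ : ℂ} (hμ : conj μ = μ * (a * d - b * c))
    (hd : conj (μ * d) = μ * a) (hc : conj (μ * c) = -(μ * b)) :
    Xm (ofFirstRow μ (-(μ * c)) (-(μ * d))) =
      wedge ![1, 0, a, b] ![0, 1, c, d] * diagonal fun j => μ * (Gv j : ℂ) := by
  rw [Xm_ofFirstRow]
  simp only [map_neg, neg_neg, hμ, hd, hc]
  ext i j
  rw [mul_diagonal, wedge, Matrix.sub_apply, vecMulVec_apply, vecMulVec_apply]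
  fin_cases i <;> fin_cases j <;>
    simp only [Gv, of_apply, cons_val', empty_val', cons_val_fin_one] <;> push_cast <;> ring

/-- Surjectivity: every 2-dimensional totally isotropic complex subspace of ℂ^{2,2} is the
range of X(x) for some nonzero null x ∈ ℝ⁶. -/
theorem isotropic_line_map_surjective (S : Submodule ℂ (Fin 4 → ℂ))
    (hdim : Module.finrank ℂ S = 2)
    (hiso : ∀ u ∈ S, ∀ w ∈ S, herm u w = 0) :
    ∃ x : Fin 6 → ℝ, x ≠ 0 ∧ Qform x = 0 ∧ S = LinearMap.range (Xm x).mulVecLin := by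
  obtain ⟨a, b, c, d, rfl⟩ := exists_eq_span_graph hdim fun s hs => hiso s hs s hs
  have hu : ![1, 0, a, b] ∈ Submodule.span ℂ {![1, 0, a, b], ![0, 1, c, d]} :=
    Submodule.subset_span (by simp)
  have hw : ![0, 1, c, d] ∈ Submodule.span ℂ {![1, 0, a, b], ![0, 1, c, d]} :=
    Submodule.subset_span (by simp)
  obtain ⟨hab, hcd, horth⟩ :=
    unitary_of_isotropic_graph (hiso _ hu _ hu) (hiso _ hw _ hw) (hiso _ hu _ hw)
  obtain ⟨μ, hμ0, hμ, hμd, hμc⟩ := exists_phase_of_unitary hab hcd horth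
  refine ⟨ofFirstRow μ (-(μ * c)) (-(μ * d)), ofFirstRow_ne_zero hμ0 _ _, ?_, ?_⟩
  · have hcd' : normSq c + normSq d = 1 := by
      rw [mul_conj, mul_conj] at hcd
      exact_mod_cast hcd
    rw [Qform_ofFirstRow, normSq_neg, normSq_neg, normSq_mul, normSq_mul]
    linear_combination normSq μ * hcd'
  · rw [Xm_ofFirstRow_eq_wedge hμ hμd hμc, range_mulVecLin_mul_diagonal _ fun j => ?_,
      range_mulVecLin_wedge (p := 0) (q := 1) (by simp)]
    fin_cases j <;> simp [Gv, hμ0]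
end
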